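/- arXiv:2001.06975 — 9 statements merged into one kernel-verified Lean document; each statement's English description precedes it below -/
import Mathlib

section
/- If a diffusion auction mechanism (π, x) is incentive-compatible, then its decoupled payments are diffusion-monotonic: for every buyer i and diffusion sets r²_i ⊆ r¹_i (both subsets of r_i), x̃_i(r²_i) ≥ x̃_i(r¹_i) and x̄_i(r²_i) ≥ x̄_i(r¹_i). -/
/-!
A buyer whose bid is high enough to win under both diffusion sets gains nothing by reporting
only `r²`, which compares the winning payments. For the losing payments: if shrinking the
diffusion set does not raise the critical bid, `x̄ = x̃ - v*` transfers the first inequality;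
if it does, a buyer bidding exactly `v*(r¹)` wins truthfully but loses after reporting `r²`,
and IC compares `x̃(r¹) - v*(r¹) = x̄(r¹)` with `x̄(r²)`.
-/

namespace DiffusionAuction

variable {ι : Type*} (wins : ℝ → Finset ι → Bool) (xw xl : Finset ι → ℝ)

def utility (v v' : ℝ) (r' : Finset ι) : ℝ :=
  (if wins v' r' then v else 0) - (if wins v' r' then xw r' else xl r')

def IsIC : Prop :=
  ∀ (v : ℝ) (r : Finset ι) (v' : ℝ) (r' : Finset ι),
    0 ≤ v → 0 ≤ v' → r' ⊆ r → utility wins xw xl v v r ≥ utility wins xw xl v v' r'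

variable {wins xw xl}

theorem utility_of_wins {v v' : ℝ} {r' : Finset ι} (h : wins v' r' = true) :
    utility wins xw xl v v' r' = v - xw r' := by
  simp [utility, h]

theorem utility_of_loses {v v' : ℝ} {r' : Finset ι} (h : wins v' r' = false) :
    utility wins xw xl v v' r' = -xl r' := by
  simp [utility, h]

namespace IsIC

variable (hIC : IsIC wins xw xl) {v : ℝ} {r₁ r₂ : Finset ι}
include hIC

theorem xw_le_of_wins (hv : 0 ≤ v) (hsub : r₂ ⊆ r₁) (h₁ : wins v r₁ = true)
    (h₂ : wins v r₂ = true) : xw r₁ ≤ xw r₂ := by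
  have := hIC v r₁ v r₂ hv hv hsub
  rw [utility_of_wins h₁, utility_of_wins h₂] at this
  linarith

theorem xw_sub_le_xl_of_wins_of_loses (hv : 0 ≤ v) (hsub : r₂ ⊆ r₁)
    (h₁ : wins v r₁ = true) (h₂ : wins v r₂ = false) : xw r₁ - v ≤ xl r₂ := by
  have := hIC v r₁ v r₂ hv hv hsub
  rw [utility_of_wins h₁, utility_of_loses h₂] at this
  linarith

end IsIC

end DiffusionAuction

open DiffusionAuction in
theorem stmt3 (wins : ℝ → Finset ℕ → Bool) (xw xl vstar : Finset ℕ → ℝ)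
    (h0 : ∀ r' : Finset ℕ, 0 ≤ vstar r')
    (hwins : ∀ (v : ℝ) (r' : Finset ℕ), wins v r' = true ↔ vstar r' ≤ v)
    (hP3 : ∀ r' : Finset ℕ, xw r' - xl r' = vstar r')
    (hIC : ∀ (v : ℝ) (r : Finset ℕ) (v' : ℝ) (r' : Finset ℕ),
      0 ≤ v → 0 ≤ v' → r' ⊆ r →
        ((if wins v r then v else 0) - (if wins v r then xw r else xl r)) ≥
        ((if wins v' r' then v else 0) - (if wins v' r' then xw r' else xl r'))) :
    ∀ r₁ r₂ : Finset ℕ, r₂ ⊆ r₁ → xw r₂ ≥ xw r₁ ∧ xl r₂ ≥ xl r₁ := by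
  intro r₁ r₂ hsub
  have hIC : IsIC wins xw xl := hIC
  have hxw : xw r₁ ≤ xw r₂ :=
    hIC.xw_le_of_wins (le_max_of_le_left (h0 r₁)) hsub
      ((hwins _ _).2 (le_max_left _ _)) ((hwins _ _).2 (le_max_right _ _))
  refine ⟨hxw, ?_⟩
  rcases le_or_gt (vstar r₂) (vstar r₁) with hle | hlt
  · linarith [hP3 r₁, hP3 r₂]
  · have hloses : wins (vstar r₁) r₂ = false :=
      Bool.eq_false_iff.2 fun h => hlt.not_ge ((hwins _ _).1 h)
    have := hIC.xw_sub_le_xl_of_wins_of_loses (h0 r₁) hsub ((hwins _ _).2 le_rfl) hloses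
    linarith [hP3 r₁]
end

section
/- An incentive-compatible diffusion auction (π, x) is individually rational if and only if for every buyer i and every type profile, the losing payment under the empty diffusion set is non-positive: x̄_i(∅) ≤ 0. -/
/-!
Under P1 and P3 the utility of reporting the true valuation `v` with diffusion set `r'` is
`max (v - v* r') 0 - x̄ r'`: winning pays `x̃ = v* + x̄`. Hence IR amounts to `x̄ r' ≤ 0` for
all `r'`, which P4 reduces to `r' = ∅`; conversely `v = 0` with `r' = ∅` yields `x̄ ∅ ≤ 0`
because `v* ≥ 0`.
-/

section

variable {wins : ℝ → Finset ℕ → Bool} {xw xl vstar : Finset ℕ → ℝ}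

theorem utility_eq_max_sub_losing_payment
    (hP1 : ∀ (v : ℝ) (r' : Finset ℕ), wins v r' = true ↔ vstar r' ≤ v)
    (hP3 : ∀ r' : Finset ℕ, xw r' - xl r' = vstar r') (v : ℝ) (r' : Finset ℕ) :
    (if wins v r' then v - xw r' else -xl r') = max (v - vstar r') 0 - xl r' := by
  have hxw := hP3 r'
  by_cases hw : vstar r' ≤ v
  · rw [if_pos ((hP1 v r').mpr hw), max_eq_left (sub_nonneg.mpr hw)]
    linarith
  · rw [if_neg (mt (hP1 v r').mp hw), max_eq_right (by linarith)]
    ring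

end

theorem stmt5 (wins : ℝ → Finset ℕ → Bool) (xw xl vstar : Finset ℕ → ℝ)
    (h0 : ∀ r' : Finset ℕ, 0 ≤ vstar r')
    (hP1 : ∀ (v : ℝ) (r' : Finset ℕ), wins v r' = true ↔ vstar r' ≤ v)
    (hP3 : ∀ r' : Finset ℕ, xw r' - xl r' = vstar r')
    (hP4 : ∀ r'' r' : Finset ℕ, r'' ⊆ r' → xw r'' ≥ xw r' ∧ xl r'' ≥ xl r') :
    (∀ (v : ℝ) (r r' : Finset ℕ), 0 ≤ v → r' ⊆ r →
        (if wins v r' then v - xw r' else -xl r') ≥ 0) ↔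
      xl ∅ ≤ 0 := by
  simp only [utility_eq_max_sub_losing_payment hP1 hP3]
  constructor
  · intro hIR
    have h := hIR 0 ∅ ∅ le_rfl subset_rfl
    rwa [max_eq_right (by linarith [h0 ∅]), ge_iff_le, zero_sub, neg_nonneg] at h
  · intro hxl v r r' _ _
    have hxl' : xl r' ≤ xl ∅ := (hP4 ∅ r' (Finset.empty_subset r')).2
    linarith [le_max_right (v - vstar r') 0]
end

section
/- Every monotonic allocation policy for a diffusion auction is implementable: there exists a payment policy x such that the mechanism (π, x) is individually rational and incentive-compatible. In particular, for any α ≥ 0, the payments x̃_i(r'_i) = −α·v*_i(r'_i) + (1+α)·v*_i(∅) (when winning) and x̄_i(r'_i) = −(1+α)·v*_i(r'_i) + (1+α)·v*_i(∅) (when losing) satisfy properties P1–P5. -/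
/-!
With decoupled payments `xw` (winning) and `xl` (losing) and winning exactly when
`xw r' - xl r' ≤ v`, a truthful bid obtains `max (v - xw r') (-xl r')`, the best utility any
bid can obtain with reported neighbour set `r'`. Since `xw` and `xl` are antitone in `r'`, this
maximum only grows when more neighbours are reported, which gives IC; IR holds because it is
at least `-xl r' ≥ -xl ∅ ≥ 0`. The payments built from `v*` are antitone because `v*` is
monotone and `α ≥ 0`, and their difference is `v*`.
-/

def utility (wins : ℝ → Finset ℕ → Bool) (pay : ℝ → Finset ℕ → ℝ)
    (v v' : ℝ) (r' : Finset ℕ) : ℝ :=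
  (if wins v' r' then v else 0) - pay v' r'

def IC (wins : ℝ → Finset ℕ → Bool) (pay : ℝ → Finset ℕ → ℝ) : Prop :=
  ∀ (v : ℝ) (r : Finset ℕ) (v' : ℝ) (r' : Finset ℕ),
    0 ≤ v → 0 ≤ v' → r' ⊆ r → utility wins pay v v r ≥ utility wins pay v v' r'

def IR (wins : ℝ → Finset ℕ → Bool) (pay : ℝ → Finset ℕ → ℝ) : Prop :=
  ∀ (v : ℝ) (r r' : Finset ℕ), 0 ≤ v → r' ⊆ r → utility wins pay v v r' ≥ 0

def decoupledPay (wins : ℝ → Finset ℕ → Bool) (xw xl : Finset ℕ → ℝ) :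
    ℝ → Finset ℕ → ℝ :=
  fun v r' => if wins v r' then xw r' else xl r'

section DecoupledPay

variable {wins : ℝ → Finset ℕ → Bool} {xw xl : Finset ℕ → ℝ}

theorem utility_decoupledPay_le (v v' : ℝ) (r' : Finset ℕ) :
    utility wins (decoupledPay wins xw xl) v v' r' ≤ max (v - xw r') (-xl r') := by
  unfold utility decoupledPay
  cases wins v' r'
  · exact le_max_of_le_right (by simp)
  · exact le_max_of_le_left le_rfl

theorem utility_decoupledPay_self (hwins : ∀ v r', wins v r' = true ↔ xw r' - xl r' ≤ v)
    (v : ℝ) (r' : Finset ℕ) :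
    utility wins (decoupledPay wins xw xl) v v r' = max (v - xw r') (-xl r') := by
  unfold utility decoupledPay
  cases h : wins v r'
  · have hlt : v < xw r' - xl r' := not_le.mp fun hle => by simp [(hwins v r').mpr hle] at h
    rw [max_eq_right (by linarith)]
    simp
  · rw [max_eq_left (by linarith [(hwins v r').mp h])]
    simp

theorem IR_decoupledPay (hwins : ∀ v r', wins v r' = true ↔ xw r' - xl r' ≤ v)
    (hxl : Antitone xl) (hxl_empty : xl ∅ ≤ 0) : IR wins (decoupledPay wins xw xl) := by
  intro v r r' _ _
  have hxl_le : xl r' ≤ xl ∅ := hxl (Finset.empty_subset r')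
  rw [utility_decoupledPay_self hwins]
  exact le_max_of_le_right (by linarith)

theorem IC_decoupledPay (hwins : ∀ v r', wins v r' = true ↔ xw r' - xl r' ≤ v)
    (hxw : Antitone xw) (hxl : Antitone xl) : IC wins (decoupledPay wins xw xl) := by
  intro v r v' r' _ _ hr
  calc utility wins (decoupledPay wins xw xl) v v' r'
      ≤ max (v - xw r') (-xl r') := utility_decoupledPay_le v v' r'
    _ ≤ max (v - xw r) (-xl r) :=
        max_le_max (by linarith [hxw hr]) (by linarith [hxl hr])
    _ = utility wins (decoupledPay wins xw xl) v v r := (utility_decoupledPay_self hwins v r).symm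

end DecoupledPay

section LinearPay

variable (vstar : Finset ℕ → ℝ) (α : ℝ)

def winPay : Finset ℕ → ℝ := fun r' => -α * vstar r' + (1 + α) * vstar ∅

def losePay : Finset ℕ → ℝ := fun r' => -(1 + α) * vstar r' + (1 + α) * vstar ∅

theorem winPay_sub_losePay (r' : Finset ℕ) :
    winPay vstar α r' - losePay vstar α r' = vstar r' := by
  simp only [winPay, losePay]
  ring

theorem losePay_empty : losePay vstar α ∅ = 0 := by
  simp only [losePay]
  ring

variable {vstar α}

theorem winPay_antitone (hα : 0 ≤ α) (hvstar : Monotone vstar) : Antitone (winPay vstar α) :=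
  fun _ _ hr => by
    simp only [winPay]
    nlinarith [hvstar hr]

theorem losePay_antitone (hα : 0 ≤ α) (hvstar : Monotone vstar) : Antitone (losePay vstar α) :=
  fun _ _ hr => by
    simp only [losePay]
    nlinarith [hvstar hr]

end LinearPay

theorem stmt7_general (wins : ℝ → Finset ℕ → Bool) (vstar : Finset ℕ → ℝ)
    (hP1 : ∀ (v : ℝ) (r' : Finset ℕ), wins v r' = true ↔ vstar r' ≤ v)
    (hmono : ∀ r' r : Finset ℕ, r' ⊆ r → vstar r' ≤ vstar r) :
    (∃ pay : ℝ → Finset ℕ → ℝ, IR wins pay ∧ IC wins pay) ∧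
    (∀ α : ℝ, 0 ≤ α →
      -- the decoupled payments from the payment policy
      (let xw : Finset ℕ → ℝ := fun r' => -α * vstar r' + (1 + α) * vstar ∅
       let xl : Finset ℕ → ℝ := fun r' => -(1 + α) * vstar r' + (1 + α) * vstar ∅
       let pay : ℝ → Finset ℕ → ℝ := fun v r' => if wins v r' then xw r' else xl r'
       -- P3
       (∀ r' : Finset ℕ, xw r' - xl r' = vstar r') ∧
       -- P4
       (∀ r'' r' : Finset ℕ, r'' ⊆ r' → xw r'' ≥ xw r' ∧ xl r'' ≥ xl r') ∧
       -- P5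
       xl ∅ ≤ 0 ∧
       -- IR and IC of the induced mechanism
       IR wins pay ∧ IC wins pay)) := by
  have hvstar : Monotone vstar := fun r' r hr => hmono r' r hr
  have hwins (α : ℝ) (v : ℝ) (r' : Finset ℕ) :
      wins v r' = true ↔ winPay vstar α r' - losePay vstar α r' ≤ v := by
    rw [winPay_sub_losePay]
    exact hP1 v r'
  have hmech (α : ℝ) (hα : 0 ≤ α) :
      IR wins (decoupledPay wins (winPay vstar α) (losePay vstar α)) ∧
        IC wins (decoupledPay wins (winPay vstar α) (losePay vstar α)) :=
    ⟨IR_decoupledPay (hwins α) (losePay_antitone hα hvstar) (losePay_empty vstar α).le,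
      IC_decoupledPay (hwins α) (winPay_antitone hα hvstar) (losePay_antitone hα hvstar)⟩
  refine ⟨⟨_, hmech 0 le_rfl⟩, fun α hα => ?_⟩
  exact ⟨winPay_sub_losePay vstar α,
    fun _ _ hr => ⟨winPay_antitone hα hvstar hr, losePay_antitone hα hvstar hr⟩,
    (losePay_empty vstar α).le, hmech α hα⟩

theorem stmt7 (wins : ℝ → Finset ℕ → Bool) (vstar : Finset ℕ → ℝ)
    (h0 : ∀ r' : Finset ℕ, 0 ≤ vstar r')
    (hP1 : ∀ (v : ℝ) (r' : Finset ℕ), wins v r' = true ↔ vstar r' ≤ v)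
    (hmono : ∀ r' r : Finset ℕ, r' ⊆ r → vstar r' ≤ vstar r) :
    (∃ pay : ℝ → Finset ℕ → ℝ, IR wins pay ∧ IC wins pay) ∧
    (∀ α : ℝ, 0 ≤ α →
      -- the decoupled payments from the payment policy
      (let xw : Finset ℕ → ℝ := fun r' => -α * vstar r' + (1 + α) * vstar ∅
       let xl : Finset ℕ → ℝ := fun r' => -(1 + α) * vstar r' + (1 + α) * vstar ∅
       let pay : ℝ → Finset ℕ → ℝ := fun v r' => if wins v r' then xw r' else xl r'
       -- P3
       (∀ r' : Finset ℕ, xw r' - xl r' = vstar r') ∧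
       -- P4
       (∀ r'' r' : Finset ℕ, r'' ⊆ r' → xw r'' ≥ xw r' ∧ xl r'' ≥ xl r') ∧
       -- P5
       xl ∅ ≤ 0 ∧
       -- IR and IC of the induced mechanism
       IR wins pay ∧ IC wins pay)) :=
  stmt7_general wins vstar hP1 hmono
end

section
/- Given any monotonic allocation policy π, the payment policy x*_i = v*_i(∅) − v*_i(r_i)·(1 − π_i(t)) (i.e., a winner pays v*_i(∅) and a loser pays v*_i(∅) − v*_i(r_i)) is optimal: among all payment policies x for which (π, x) is individually rational and incentive-compatible, x* maximizes the seller's revenue Rev = Σ_i x_i(t) at every type profile t. -/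
noncomputable def paystar (wins : ℝ → Finset ℕ → Bool) (vstar : Finset ℕ → ℝ)
    (v : ℝ) (r : Finset ℕ) : ℝ :=
  vstar ∅ - vstar r * (1 - (if wins v r then 1 else 0))

namespace CriticalBid

variable {W : ℝ → Finset ℕ → Bool} {V : Finset ℕ → ℝ}

theorem utility_paystar (v v' : ℝ) (r' : Finset ℕ) :
    utility W (paystar W V) v v' r' = (if W v' r' then v else V r') - V ∅ := by
  unfold utility paystar
  split_ifs <;> ring

variable (hW : ∀ v r, W v r = true ↔ V r ≤ v)
include hW

theorem wins_eq_false_iff {v : ℝ} {r : Finset ℕ} : W v r = false ↔ v < V r := by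
  rw [← Bool.not_eq_true, hW, not_le]

theorem utility_paystar_self (v : ℝ) (r : Finset ℕ) :
    utility W (paystar W V) v v r = max v (V r) - V ∅ := by
  rw [utility_paystar]
  by_cases h : V r ≤ v
  · simp [(hW v r).mpr h, h]
  · simp [(wins_eq_false_iff hW).mpr (not_le.mp h), (not_le.mp h).le]

theorem paystar_IR (hmono : ∀ r' r, r' ⊆ r → V r' ≤ V r) : IR W (paystar W V) := by
  intro v _ r' _ _
  rw [utility_paystar_self hW]
  have := hmono ∅ r' r'.empty_subset
  linarith [le_max_right v (V r')]

theorem paystar_IC (hmono : ∀ r' r, r' ⊆ r → V r' ≤ V r) : IC W (paystar W V) := by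
  intro v r v' r' _ _ hsub
  rw [utility_paystar_self hW, utility_paystar, ge_iff_le, sub_le_sub_iff_right]
  have hdev : (if W v' r' then v else V r') ≤ max v (V r') := by
    split_ifs
    exacts [le_max_left _ _, le_max_right _ _]
  exact hdev.trans (max_le_max le_rfl (hmono r' r hsub))

variable {pay : ℝ → Finset ℕ → ℝ} (hIR : IR W pay) (hIC : IC W pay)
include hIR hIC

theorem pay_le_of_wins (hV : 0 ≤ V ∅) {v : ℝ} {r : Finset ℕ} (hv : 0 ≤ v)
    (hwin : W v r = true) : pay v r ≤ V ∅ := by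
  have hwin₀ : W (V ∅) ∅ = true := (hW _ _).mpr le_rfl
  have hdev := hIC v r (V ∅) ∅ hv hV r.empty_subset
  have hcap := hIR (V ∅) ∅ ∅ hV subset_rfl
  simp only [utility, hwin, hwin₀, if_true] at hdev hcap
  linarith

theorem pay_le_of_loses (hV : 0 ≤ V ∅) {v : ℝ} {r : Finset ℕ} (hv : 0 ≤ v)
    (hlose : W v r = false) : pay v r ≤ V ∅ - V r := by
  have hvr : v < V r := (wins_eq_false_iff hW).mp hlose
  have hwin : W (V r) r = true := (hW _ _).mpr le_rfl
  have hprice : pay (V r) r ≤ V ∅ := pay_le_of_wins hW hIR hIC hV (hv.trans hvr.le) hwin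
  suffices V r ≤ pay (V r) r - pay v r by linarith
  refine le_of_forall_lt_imp_le_of_dense fun w hw ↦ ?_
  -- clamping at `0` keeps the lower report admissible for IC
  set w₀ := max w 0
  have hw₀ : w₀ < V r := max_lt hw (hv.trans_lt hvr)
  have hmid := hIC v r w₀ r hv (le_max_right _ _) subset_rfl
  have hup := hIC w₀ r (V r) r (le_max_right _ _) (hv.trans hvr.le) subset_rfl
  simp only [utility, hlose, (wins_eq_false_iff hW).mpr hw₀, hwin, if_true, Bool.false_eq_true,
    if_false] at hmid hup
  linarith [le_max_left w 0]

theorem pay_le_paystar (hV : 0 ≤ V ∅) {v : ℝ} (r : Finset ℕ) (hv : 0 ≤ v) :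
    pay v r ≤ paystar W V v r := by
  cases hres : W v r
  · simpa [paystar, hres] using pay_le_of_loses hW hIR hIC hV hv hres
  · simpa [paystar, hres] using pay_le_of_wins hW hIR hIC hV hv hres

end CriticalBid

open CriticalBid in
theorem stmt8 {ι : Type*} [Fintype ι]
    (wins : ι → ℝ → Finset ℕ → Bool) (vstar : ι → Finset ℕ → ℝ)
    (h0 : ∀ (i : ι) (r' : Finset ℕ), 0 ≤ vstar i r')
    (hmono : ∀ (i : ι) (r' r : Finset ℕ), r' ⊆ r → vstar i r' ≤ vstar i r)
    (hP1 : ∀ (i : ι) (v : ℝ) (r' : Finset ℕ), wins i v r' = true ↔ vstar i r' ≤ v) :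
    (∀ i : ι, IR (wins i) (paystar (wins i) (vstar i)) ∧
              IC (wins i) (paystar (wins i) (vstar i))) ∧
    (∀ pay : ι → ℝ → Finset ℕ → ℝ,
      (∀ i : ι, IR (wins i) (pay i) ∧ IC (wins i) (pay i)) →
      ∀ t : ι → ℝ × Finset ℕ, (∀ i : ι, 0 ≤ (t i).1) →
        ∑ i : ι, pay i (t i).1 (t i).2 ≤
          ∑ i : ι, paystar (wins i) (vstar i) (t i).1 (t i).2) := by
  refine ⟨fun i ↦ ⟨paystar_IR (hP1 i) (hmono i), paystar_IC (hP1 i) (hmono i)⟩, ?_⟩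
  intro pay hpay t ht
  exact Finset.sum_le_sum fun i _ ↦
    pay_le_paystar (hP1 i) (hpay i).1 (hpay i).2 (h0 i ∅) _ (ht i)
end

section
/- Under the constraints (1) x̄_i bid-independent, (2) x̃_i(r_i) = x̄_i(r_i) + v*_i(r_i), (3) x̄_i(r_i) + v*_i(r_i) ≤ x̄_i(r'_i) + v*_i(r'_i) for all r'_i ⊆ r_i, and (4) x̄_i(∅) ≤ 0, the losing payment is bounded: x̄_i(r_i) ≤ v*_i(∅) − v*_i(r_i); and this bound is attained by the feasible solution x̄_i(r'_i) = v*_i(∅) − v*_i(r'_i), x̃_i(r'_i) = v*_i(∅), provided v*_i is non-decreasing under set inclusion. -/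
/-!
Constraint (3) at `r' = ∅`, combined with (4), gives the bound. The candidate makes
`x̄ + v*` constant, equal to `v*(∅)`, so it satisfies (3) with equality.
-/

theorem losing_payment_le_sub {α G : Type*} [AddCommGroup G] [PartialOrder G]
    [IsOrderedAddMonoid G] {vstar xl : Finset α → G} {r : Finset α}
    (h3 : ∀ r' ⊆ r, xl r + vstar r ≤ xl r' + vstar r') (h4 : xl ∅ ≤ 0) :
    xl r ≤ vstar ∅ - vstar r :=
  le_sub_iff_add_le.mpr <| (h3 ∅ r.empty_subset).trans <| by simpa using h4

theorem stmt9_general (vstar : Finset ℕ → ℝ) (r : Finset ℕ) :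
    -- the bound
    (∀ xl : Finset ℕ → ℝ,
      (∀ r' : Finset ℕ, r' ⊆ r → xl r + vstar r ≤ xl r' + vstar r') →  -- constraint (3)
      xl ∅ ≤ 0 →                                                        -- constraint (4)
      xl r ≤ vstar ∅ - vstar r) ∧
    -- attainment by the feasible solution x̄(r') = v*(∅) − v*(r'), x̃(r') = v*(∅)
    (let xl : Finset ℕ → ℝ := fun r' => vstar ∅ - vstar r'
     let xw : Finset ℕ → ℝ := fun _ => vstar ∅
     (∀ r' : Finset ℕ, xw r' = xl r' + vstar r') ∧                       -- constraint (2)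
     (∀ r' : Finset ℕ, r' ⊆ r → xl r + vstar r ≤ xl r' + vstar r') ∧    -- constraint (3)
     xl ∅ ≤ 0 ∧                                                          -- constraint (4)
     xl r = vstar ∅ - vstar r) :=
  ⟨fun _ h3 h4 => losing_payment_le_sub h3 h4,
    fun _ => (sub_add_cancel _ _).symm,
    fun _ _ => (sub_add_cancel _ _).trans_le (sub_add_cancel _ _).ge,
    (sub_self _).le,
    rfl⟩

theorem stmt9 (vstar : Finset ℕ → ℝ) (r : Finset ℕ)
    (h0 : ∀ r' : Finset ℕ, 0 ≤ vstar r')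
    (hmono : ∀ r' r'' : Finset ℕ, r' ⊆ r'' → vstar r' ≤ vstar r'') :
    -- the bound
    (∀ xl : Finset ℕ → ℝ,
      (∀ r' : Finset ℕ, r' ⊆ r → xl r + vstar r ≤ xl r' + vstar r') →  -- constraint (3)
      xl ∅ ≤ 0 →                                                        -- constraint (4)
      xl r ≤ vstar ∅ - vstar r) ∧
    -- attainment by the feasible solution x̄(r') = v*(∅) − v*(r'), x̃(r') = v*(∅)
    (let xl : Finset ℕ → ℝ := fun r' => vstar ∅ - vstar r'
     let xw : Finset ℕ → ℝ := fun _ => vstar ∅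
     (∀ r' : Finset ℕ, xw r' = xl r' + vstar r') ∧                       -- constraint (2)
     (∀ r' : Finset ℕ, r' ⊆ r → xl r + vstar r ≤ xl r' + vstar r') ∧    -- constraint (3)
     xl ∅ ≤ 0 ∧                                                          -- constraint (4)
     xl r = vstar ∅ - vstar r) :=
  stmt9_general vstar r
end

section
/- If a diffusion auction mechanism satisfies P1–P4 (value-monotonic allocation, bid-independent decoupled payments, x̃_i(r'_i) − x̄_i(r'_i) = v*_i(r'_i), and diffusion-monotonic payments), then no winner under truthful reporting can strictly benefit from any misreport that makes her lose: for all r'_i ⊆ r_i, if v_i ≥ v*_i(r_i), then v_i − x̃_i(r_i) ≥ −x̄_i(r'_i). -/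
theorem stmt12_general (xw xl vstar : Finset ℕ → ℝ)
    (hP3 : ∀ r' : Finset ℕ, xw r' - xl r' = vstar r')
    (hP4 : ∀ r'' r' : Finset ℕ, r'' ⊆ r' → xw r'' ≥ xw r' ∧ xl r'' ≥ xl r') :
    ∀ (v : ℝ) (r r' : Finset ℕ), r' ⊆ r → vstar r ≤ v →
      v - xw r ≥ -xl r' := by
  intro v r r' hsub hv
  calc v - xw r ≥ vstar r - xw r := by gcongr
    _ = -xl r := by rw [← hP3 r]; ring
    _ ≥ -xl r' := neg_le_neg (hP4 r' r hsub).2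

theorem stmt12 (xw xl vstar : Finset ℕ → ℝ)
    (h0 : ∀ r' : Finset ℕ, 0 ≤ vstar r')
    (hP3 : ∀ r' : Finset ℕ, xw r' - xl r' = vstar r')
    (hP4 : ∀ r'' r' : Finset ℕ, r'' ⊆ r' → xw r'' ≥ xw r' ∧ xl r'' ≥ xl r') :
    ∀ (v : ℝ) (r r' : Finset ℕ), r' ⊆ r → vstar r ≤ v →
      v - xw r ≥ -xl r' :=
  stmt12_general xw xl vstar hP3 hP4
end

section
/- If a diffusion auction mechanism satisfies P1–P4, then no loser under truthful reporting can strictly benefit from any misreport that makes her win: for all r'_i ⊆ r_i, if v_i < v*_i(r_i), then −x̄_i(r_i) ≥ v_i − x̃_i(r'_i). -/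
theorem stmt13_general (xw xl vstar : Finset ℕ → ℝ)
    (hP3 : ∀ r' : Finset ℕ, xw r' - xl r' = vstar r')
    (hP4 : ∀ r'' r' : Finset ℕ, r'' ⊆ r' → xw r'' ≥ xw r' ∧ xl r'' ≥ xl r') :
    ∀ (v : ℝ) (r r' : Finset ℕ), r' ⊆ r → v < vstar r →
      -xl r ≥ v - xw r' := by
  intro v r r' hsub hv
  calc -xl r = vstar r - xw r := by linarith [hP3 r]
    _ ≥ v - xw r := by linarith
    _ ≥ v - xw r' := by linarith [(hP4 r' r hsub).1]

theorem stmt13 (xw xl vstar : Finset ℕ → ℝ)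
    (h0 : ∀ r' : Finset ℕ, 0 ≤ vstar r')
    (hmono : ∀ r' r : Finset ℕ, r' ⊆ r → vstar r' ≤ vstar r)
    (hP3 : ∀ r' : Finset ℕ, xw r' - xl r' = vstar r')
    (hP4 : ∀ r'' r' : Finset ℕ, r'' ⊆ r' → xw r'' ≥ xw r' ∧ xl r'' ≥ xl r') :
    ∀ (v : ℝ) (r r' : Finset ℕ), r' ⊆ r → v < vstar r →
      -xl r ≥ v - xw r' :=
  stmt13_general xw xl vstar hP3 hP4
end

section
/- Under an IC diffusion auction satisfying P1–P4, buyer i's utility from any report (v'_i, r'_i) with r'_i ⊆ r_i is minimized (over all reports) at value −x̄_i(∅), attained by reporting the empty diffusion set with a losing bid; consequently the mechanism is IR iff x̄_i(∅) ≤ 0 for all i and all profiles. -/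
/-!
A losing report yields `-xl r'` and a winning one `v' - vstar r' - xl r' ≥ -xl r'`, so every
report yields at least `-xl r' ≥ -xl ∅`, by diffusion monotonicity of `xl`. Reporting `∅` with
bid `0` yields exactly `-xl ∅`: since critical bids are nonnegative, that bid either loses or
wins at critical bid `0`. IR is therefore equivalent to `-xl ∅ ≥ 0`.
-/

open Finset

lemma surplus_nonneg (c v : ℝ) : 0 ≤ if c ≤ v then v - c else 0 := by
  split_ifs <;> linarith

lemma surplus_zero_bid {c : ℝ} (hc : 0 ≤ c) : (if c ≤ 0 then 0 - c else 0) = 0 := by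
  split_ifs <;> linarith

lemma neg_empty_le_utility {α : Type*} {xl vstar : Finset α → ℝ} (hxl : Antitone xl)
    (v : ℝ) (r : Finset α) : (if vstar r ≤ v then v - vstar r else 0) - xl r ≥ -xl ∅ := by
  linarith [hxl (empty_subset r), surplus_nonneg (vstar r) v]

lemma utility_empty_zero_bid {α : Type*} {xl vstar : Finset α → ℝ} (h0 : 0 ≤ vstar ∅) :
    (if vstar ∅ ≤ 0 then 0 - vstar ∅ else 0) - xl ∅ = -xl ∅ := by
  rw [surplus_zero_bid h0, zero_sub]

theorem stmt14_general (xw xl vstar : Finset ℕ → ℝ) (r : Finset ℕ)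
    (h0 : ∀ r' : Finset ℕ, 0 ≤ vstar r')
    (hP4 : ∀ r'' r' : Finset ℕ, r'' ⊆ r' → xw r'' ≥ xw r' ∧ xl r'' ≥ xl r') :
    -- lower bound over all reports
    (∀ (v' : ℝ) (r' : Finset ℕ), 0 ≤ v' → r' ⊆ r →
      ((if vstar r' ≤ v' then v' - vstar r' else 0) - xl r') ≥ -xl ∅) ∧
    -- attained at the empty diffusion set with a losing bid
    (∃ (v' : ℝ) (r' : Finset ℕ), 0 ≤ v' ∧ r' ⊆ r ∧
      ((if vstar r' ≤ v' then v' - vstar r' else 0) - xl r') = -xl ∅) ∧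
    -- IR iff x̄(∅) ≤ 0
    ((∀ (v : ℝ) (r' : Finset ℕ), 0 ≤ v → r' ⊆ r →
        ((if vstar r' ≤ v then v - vstar r' else 0) - xl r') ≥ 0) ↔
      xl ∅ ≤ 0) := by
  have hxl : Antitone xl := fun r'' r' h => (hP4 r'' r' h).2
  have hzero := utility_empty_zero_bid (xl := xl) (h0 ∅)
  refine ⟨fun v' r' _ _ => neg_empty_le_utility hxl v' r',
    ⟨0, ∅, le_rfl, empty_subset r, hzero⟩, fun hIR => ?_, fun hle v r' _ _ => ?_⟩
  · have hIR_empty := hIR 0 ∅ le_rfl (empty_subset r)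
    rw [hzero] at hIR_empty
    linarith
  · linarith [neg_empty_le_utility (vstar := vstar) hxl v r']

theorem stmt14 (xw xl vstar : Finset ℕ → ℝ) (r : Finset ℕ)
    (h0 : ∀ r' : Finset ℕ, 0 ≤ vstar r')
    (hP3 : ∀ r' : Finset ℕ, xw r' - xl r' = vstar r')
    (hP4 : ∀ r'' r' : Finset ℕ, r'' ⊆ r' → xw r'' ≥ xw r' ∧ xl r'' ≥ xl r') :
    -- lower bound over all reports
    (∀ (v' : ℝ) (r' : Finset ℕ), 0 ≤ v' → r' ⊆ r →
      ((if vstar r' ≤ v' then v' - vstar r' else 0) - xl r') ≥ -xl ∅) ∧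
    -- attained at the empty diffusion set with a losing bid
    (∃ (v' : ℝ) (r' : Finset ℕ), 0 ≤ v' ∧ r' ⊆ r ∧
      ((if vstar r' ≤ v' then v' - vstar r' else 0) - xl r') = -xl ∅) ∧
    -- IR iff x̄(∅) ≤ 0
    ((∀ (v : ℝ) (r' : Finset ℕ), 0 ≤ v → r' ⊆ r →
        ((if vstar r' ≤ v then v - vstar r' else 0) - xl r') ≥ 0) ↔
      xl ∅ ≤ 0) :=
  stmt14_general xw xl vstar r h0 hP4
end

section
/- Under the revenue-optimal payment policy x*_i = v*_i(∅) − v*_i(r_i)·(1 − π_i(t)) for a monotonic allocation π, every buyer's payment is fully determined by her critical-bid function, and the seller's revenue at truthful profile t equals v*_w(r_w) + Σ_{i ∈ N_{-s}} (v*_i(∅) − v*_i(r_i)), where w is the winner; moreover each loser's payment v*_i(∅) − v*_i(r_i) is non-positive (losers receive non-negative rewards). -/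
theorem sub_mul_one_sub_ite {R : Type*} [CommRing R] (p : Prop) [Decidable p] (a b : R) :
    a - b * (1 - if p then 1 else 0) = a - b + if p then b else 0 := by
  split_ifs <;> ring

theorem stmt15_general {ι : Type*} [Fintype ι] [DecidableEq ι]
    (vstar : ι → Finset ℕ → ℝ) (r : ι → Finset ℕ) (w : ι) (pay : ι → ℝ)
    (hmono : ∀ (i : ι) (r' r'' : Finset ℕ), r' ⊆ r'' → vstar i r' ≤ vstar i r'')
    (hpay : ∀ i : ι,
      pay i = vstar i ∅ - vstar i (r i) * (1 - (if i = w then 1 else 0))) :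
    -- the revenue decomposition
    (∑ i : ι, pay i) = vstar w (r w) + ∑ i : ι, (vstar i ∅ - vstar i (r i)) ∧
    -- each loser's payment is non-positive
    (∀ i : ι, i ≠ w → pay i ≤ 0) := by
  have hpay_split : ∀ i, pay i = vstar i ∅ - vstar i (r i) + if i = w then vstar i (r i) else 0 :=
    fun i => (hpay i).trans (sub_mul_one_sub_ite _ _ _)
  refine ⟨?_, fun i hi => ?_⟩
  · rw [Finset.sum_congr rfl fun i _ => hpay_split i, Finset.sum_add_distrib,
      Finset.sum_ite_eq', if_pos (Finset.mem_univ w), add_comm]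
  · rw [hpay i, if_neg hi, sub_zero, mul_one]
    exact sub_nonpos_of_le (hmono i ∅ (r i) (Finset.empty_subset _))

theorem stmt15 {ι : Type*} [Fintype ι] [DecidableEq ι]
    (vstar : ι → Finset ℕ → ℝ) (r : ι → Finset ℕ) (w : ι) (pay : ι → ℝ)
    (h0 : ∀ (i : ι) (r' : Finset ℕ), 0 ≤ vstar i r')
    (hmono : ∀ (i : ι) (r' r'' : Finset ℕ), r' ⊆ r'' → vstar i r' ≤ vstar i r'')
    (hpay : ∀ i : ι,
      pay i = vstar i ∅ - vstar i (r i) * (1 - (if i = w then 1 else 0))) :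
    -- the revenue decomposition
    (∑ i : ι, pay i) = vstar w (r w) + ∑ i : ι, (vstar i ∅ - vstar i (r i)) ∧
    -- each loser's payment is non-positive
    (∀ i : ι, i ≠ w → pay i ≤ 0) :=
  stmt15_general vstar r w pay hmono hpay
end
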